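/- arXiv:2004.06197 — 2 statements merged into one kernel-verified Lean document; each statement's English description precedes it below -/
import Mathlib

section
/- Let A ⊆ B be k-algebras which are both prime Goldie rings. If LD A = LD B and B is LD-stable (i.e. LD B = GK B), then A is LD-stable (i.e. LD A = GK A). -/
open scoped ENNReal Classical

/-- A subframe of a `k`-algebra `A`: a finite-dimensional subspace containing `1`. -/
def Subframe (k : Type*) [Field k] (A : Type*) [Ring A] [Algebra k A]
    (V : Submodule k A) : Prop :=
  1 ∈ V ∧ FiniteDimensional k V

/-- The volume difference inequality `VDI(A)_d` for a subspace `V` of a `k`-algebra `A`. -/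
def VDI (k : Type*) [Field k] (A : Type*) [Ring A] [Algebra k A]
    (V : Submodule k A) (d : ℝ) : Prop :=
  ∃ c : ℝ, 0 < c ∧ ∀ W : Submodule k A, W ≠ ⊥ → FiniteDimensional k W →
    (Module.finrank k W : ℝ) + c * (Module.finrank k W : ℝ) ^ ((d - 1) / d)
      ≤ (Module.finrank k ↥(V * W) : ℝ)

/-- The lower transcendence degree of a `k`-algebra `A`, as an extended nonnegative real. -/
noncomputable def LD (k : Type*) [Field k] (A : Type*) [Ring A] [Algebra k A] : ℝ≥0∞ :=
  if ∀ V : Submodule k A, Subframe k A V →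
      ∃ W : Submodule k A, W ≠ ⊥ ∧ FiniteDimensional k W ∧
        Module.finrank k ↥(V * W) = Module.finrank k W
  then 0
  else ⨆ (V : Submodule k A) (_ : Subframe k A V),
    sSup {e : ℝ≥0∞ | ∃ d : ℝ, 0 < d ∧ e = ENNReal.ofReal d ∧ VDI k A V d}

/-- The Gelfand–Kirillov dimension of a `k`-algebra `A`. -/
noncomputable def GKdim (k : Type*) [Field k] (A : Type*) [Ring A] [Algebra k A] : ℝ≥0∞ :=
  ⨆ (V : Submodule k A) (_ : Subframe k A V),
    Filter.limsup
      (fun n : ℕ =>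
        ENNReal.ofReal (Real.log (Module.finrank k ↥(V ^ n)) / Real.log n))
      Filter.atTop

/-- A `k`-algebra is `LD`-stable if its lower transcendence degree equals its
Gelfand–Kirillov dimension. -/
def LDStable (k : Type*) [Field k] (A : Type*) [Ring A] [Algebra k A] : Prop :=
  LD k A = GKdim k A

/-- A prime ring: `a R b = 0` implies `a = 0` or `b = 0`. -/
def IsPrimeRing' (R : Type*) [Ring R] : Prop :=
  ∀ a b : R, (∀ r : R, a * r * b = 0) → a = 0 ∨ b = 0

/-- Finite uniform (Goldie) dimension: `R` contains no infinite independent family of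
nonzero right ideals. -/
def HasFiniteUniformDimension (R : Type*) [Ring R] : Prop :=
  ¬ ∃ f : ℕ → Submodule Rᵐᵒᵖ R,
      (∀ n, f n ≠ ⊥) ∧ (∀ n, f n ⊓ (⨆ (m : ℕ) (_ : m ≠ n), f m) = ⊥)

/-- The right annihilator of a subset of a ring. -/
def RightAnn (R : Type*) [Ring R] (S : Set R) : Set R :=
  {x : R | ∀ a ∈ S, a * x = 0}

/-- The ascending chain condition on right annihilators. -/
def ACCRightAnnihilators (R : Type*) [Ring R] : Prop :=
  ∀ f : ℕ → Set R, (∀ n, ∃ S : Set R, f n = RightAnn R S) →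
    (∀ n, f n ⊆ f (n + 1)) → ∃ N, ∀ n, N ≤ n → f n = f N

/-- A prime (right) Goldie ring: a prime ring with finite uniform dimension and the
ascending chain condition on right annihilators. -/
def IsPrimeGoldie (R : Type*) [Ring R] : Prop :=
  IsPrimeRing' R ∧ HasFiniteUniformDimension R ∧ ACCRightAnnihilators R

/-- An Ore domain: a domain in which the nonzero elements form a left and right Ore set. -/
def IsOreDomain (A : Type*) [Ring A] : Prop :=
  IsDomain A ∧
  (∀ (a s : A), s ≠ 0 → ∃ b t : A, t ≠ 0 ∧ a * t = s * b) ∧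
  (∀ (a s : A), s ≠ 0 → ∃ b t : A, t ≠ 0 ∧ t * a = b * s)
/-!
For a subframe `V` of a nontrivial algebra, `VDI(A)_d` applied to `W = V ^ n` gives
`dim V ^ (n + 1) ≥ dim V ^ n + c (dim V ^ n) ^ ((d - 1) / d)`. Hence `(dim V ^ n) ^ (1 / d)` grows
at least linearly, `dim V ^ n ≥ (ε n) ^ d`, and `LD A ≤ GK A`. As `GK` is monotone under
subalgebras, `GK A ≤ GK B = LD B = LD A ≤ GK A`. A trivial `B` has `GK B = 0`, which forces
`LD A = 0`.
-/

open Filter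

namespace Real

lemma rpow_sub_rpow_le_mul_sub {x y d : ℝ} (hx : 0 ≤ x) (hxy : x ≤ y) (hd : 1 ≤ d) :
    y ^ d - x ^ d ≤ d * y ^ (d - 1) * (y - x) := by
  rcases hxy.eq_or_lt with rfl | hlt
  · simp
  have hy : 0 < y := hx.trans_lt hlt
  have hs : -1 ≤ x / y - 1 := by linarith [div_nonneg hx hy.le]
  -- Bernoulli's inequality at `1 + s = x / y`, scaled by `y ^ d`
  have hbernoulli := one_add_mul_self_le_rpow_one_add hs hd
  rw [add_sub_cancel, div_rpow hx hy.le, le_div_iff₀ (rpow_pos_of_pos hy d)] at hbernoulli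
  have hyd : y ^ d = y ^ (d - 1) * y := by
    rw [← rpow_add_one hy.ne']; ring_nf
  rw [hyd] at hbernoulli ⊢
  have : (1 + d * (x / y - 1)) * (y ^ (d - 1) * y)
      = y ^ (d - 1) * y + d * y ^ (d - 1) * (x - y) := by
    field_simp
  linarith

lemma add_min_le_of_rpow_add_le {x y c d : ℝ} (hx : 1 ≤ x) (hy : 0 ≤ y) (hc : 0 < c)
    (hd : 1 ≤ d) (h : x ^ d + c * x ^ (d - 1) ≤ y ^ d) :
    x + min 1 (c / (d * 2 ^ (d - 1))) ≤ y := by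
  have hx0 : 0 < x := by linarith
  have hxd : 0 < x ^ (d - 1) := rpow_pos_of_pos hx0 _
  have hxy : x ≤ y :=
    (rpow_le_rpow_iff (z := d) hx0.le hy (by linarith)).mp (by nlinarith [mul_pos hc hxd])
  rcases le_or_gt (x + 1) y with hfar | hnear
  · linarith [min_le_left 1 (c / (d * 2 ^ (d - 1)))]
  have hy2x : y ^ (d - 1) ≤ 2 ^ (d - 1) * x ^ (d - 1) := by
    rw [← mul_rpow zero_le_two hx0.le]
    exact rpow_le_rpow hy (by linarith) (by linarith)
  have hc_le : c * x ^ (d - 1) ≤ d * 2 ^ (d - 1) * (y - x) * x ^ (d - 1) := by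
    calc c * x ^ (d - 1) ≤ y ^ d - x ^ d := by linarith
      _ ≤ d * y ^ (d - 1) * (y - x) := rpow_sub_rpow_le_mul_sub hx0.le hxy hd
      _ ≤ d * (2 ^ (d - 1) * x ^ (d - 1)) * (y - x) := by gcongr
      _ = _ := by ring
  have : c / (d * 2 ^ (d - 1)) ≤ y - x := by
    rw [div_le_iff₀ (by positivity)]
    nlinarith [le_of_mul_le_mul_right hc_le hxd]
  linarith [min_le_right 1 (c / (d * 2 ^ (d - 1)))]

lemma exists_rpow_le_of_add_rpow_le {f : ℕ → ℝ} {c d : ℝ} (hc : 0 < c) (hd : 1 ≤ d)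
    (hf : ∀ n, 1 ≤ f n) (hstep : ∀ n, f n + c * f n ^ ((d - 1) / d) ≤ f (n + 1)) :
    ∃ ε > 0, ∀ n : ℕ, (ε * n) ^ d ≤ f n := by
  set ε := min 1 (c / (d * 2 ^ (d - 1)))
  have hd0 : d ≠ 0 := by positivity
  have hf0 n : 0 ≤ f n := zero_le_one.trans (hf n)
  have hroot n : f n ^ d⁻¹ + ε ≤ f (n + 1) ^ d⁻¹ := by
    refine add_min_le_of_rpow_add_le (one_le_rpow (hf n) (by positivity))
      (rpow_nonneg (hf0 _) _) hc hd ?_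
    rw [rpow_inv_rpow (hf0 _) hd0, rpow_inv_rpow (hf0 _) hd0, ← rpow_mul (hf0 _), inv_mul_eq_div]
    exact hstep n
  have hlin n : ε * n ≤ f n ^ d⁻¹ := by
    induction n with
    | zero => simpa using rpow_nonneg (hf0 0) _
    | succ n ih => push_cast; linarith [hroot n]
  refine ⟨ε, lt_min one_pos (by positivity), fun n => ?_⟩
  calc (ε * n) ^ d ≤ (f n ^ d⁻¹) ^ d :=
        rpow_le_rpow (by positivity) (hlin n) (by linarith)
    _ = f n := rpow_inv_rpow (hf0 _) hd0

lemma ofReal_le_limsup_log_div_log {f : ℕ → ℝ} {ε d : ℝ} (hε : 0 < ε)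
    (h : ∀ n : ℕ, (ε * n) ^ d ≤ f n) :
    ENNReal.ofReal d ≤ limsup (fun n : ℕ => ENNReal.ofReal (log (f n) / log n)) atTop := by
  have hlim : Tendsto (fun n : ℕ => d + d * log ε / log n) atTop (nhds d) := by
    simpa using tendsto_const_nhds.add (tendsto_const_nhds.div_atTop
      (tendsto_log_atTop.comp tendsto_natCast_atTop_atTop))
  rw [← ((ENNReal.continuous_ofReal.tendsto d).comp hlim).limsup_eq]
  refine limsup_le_limsup (eventually_atTop.mpr ⟨2, fun n hn => ?_⟩)
  have hn1 : (1 : ℝ) < n := by exact_mod_cast hn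
  have hεn : 0 < ε * n := by positivity
  have hlog : 0 < log n := log_pos hn1
  have hfn : d * (log ε + log n) ≤ log (f n) := by
    rw [← log_mul hε.ne' (by positivity), ← log_rpow hεn]
    exact log_le_log (rpow_pos_of_pos hεn d) (h n)
  refine ENNReal.ofReal_le_ofReal ?_
  rw [le_div_iff₀ hlog]
  calc (d + d * log ε / log n) * log n = d * (log ε + log n) := by field_simp; ring
    _ ≤ log (f n) := hfn

end Real

section GrowthOfSubframes

variable {k : Type*} [Field k] {A : Type*} [Ring A] [Algebra k A] {V : Submodule k A}

lemma Subframe.pow (hV : Subframe k A V) (n : ℕ) : Subframe k A (V ^ n) := by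
  refine ⟨Submodule.one_le.mp (one_le_pow_of_one_le' (Submodule.one_le.mpr hV.1) n), ?_⟩
  exact (Submodule.fg_iff_finiteDimensional _).mp
    (((Submodule.fg_iff_finiteDimensional V).mpr hV.2).pow n)

lemma Subframe.ne_bot [Nontrivial A] (hV : Subframe k A V) : V ≠ ⊥ := fun h =>
  one_ne_zero ((Submodule.mem_bot k).mp (h ▸ hV.1))

lemma Subframe.one_le_finrank [Nontrivial A] (hV : Subframe k A V) :
    1 ≤ Module.finrank k V := by
  have := hV.2
  exact Nat.one_le_iff_ne_zero.mpr (Submodule.finrank_eq_zero.not.mpr hV.ne_bot)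

lemma Subframe.map {B : Type*} [Ring B] [Algebra k B] (f : A →ₐ[k] B) (hV : Subframe k A V) :
    Subframe k B (V.map f.toLinearMap) := by
  have := hV.2
  exact ⟨by simpa using Submodule.mem_map_of_mem (f := f.toLinearMap) hV.1, inferInstance⟩

/-- Dimensions are integers, so the strict growth `dim W < dim (V * W)` is growth by at least 1. -/
lemma VDI.one {d : ℝ} (h : VDI k A V d) : VDI k A V 1 := by
  obtain ⟨c, hc, hW⟩ := h
  refine ⟨1, one_pos, fun W hW0 hWfd => ?_⟩
  have hpos : 0 < (Module.finrank k W : ℝ) := by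
    exact_mod_cast Module.finrank_pos_iff.mpr (Submodule.nontrivial_iff_ne_bot.mpr hW0)
  have hlt : Module.finrank k W < Module.finrank k ↥(V * W) := by
    exact_mod_cast (lt_add_of_pos_right _ (mul_pos hc (Real.rpow_pos_of_pos hpos _))).trans_le
      (hW W hW0 hWfd)
  simp only [sub_self, zero_div, Real.rpow_zero, mul_one]
  exact_mod_cast hlt

lemma VDI.finrank_pow_succ [Nontrivial A] (hV : Subframe k A V) {d : ℝ} (h : VDI k A V d) :
    ∃ c > 0, ∀ n : ℕ, (Module.finrank k ↥(V ^ n) : ℝ)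
      + c * (Module.finrank k ↥(V ^ n) : ℝ) ^ ((d - 1) / d) ≤ Module.finrank k ↥(V ^ (n + 1)) := by
  obtain ⟨c, hc, hW⟩ := h
  refine ⟨c, hc, fun n => ?_⟩
  rw [pow_succ']
  exact hW _ (hV.pow n).ne_bot (hV.pow n).2

lemma Subframe.limsup_le_GKdim (hV : Subframe k A V) :
    limsup (fun n : ℕ => ENNReal.ofReal (Real.log (Module.finrank k ↥(V ^ n)) / Real.log n))
      atTop ≤ GKdim k A :=
  le_iSup₂_of_le V hV le_rfl

lemma VDI.ofReal_le_GKdim [Nontrivial A] (hV : Subframe k A V) {d : ℝ} (h : VDI k A V d) :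
    ENNReal.ofReal d ≤ GKdim k A := by
  wlog hd : 1 ≤ d generalizing d
  · exact (ENNReal.ofReal_le_ofReal (by linarith)).trans (this h.one le_rfl)
  obtain ⟨c, hc, hstep⟩ := h.finrank_pow_succ hV
  obtain ⟨ε, hε, hgrowth⟩ := Real.exists_rpow_le_of_add_rpow_le hc hd
    (fun n => by exact_mod_cast (hV.pow n).one_le_finrank) hstep
  exact (Real.ofReal_le_limsup_log_div_log hε hgrowth).trans hV.limsup_le_GKdim

theorem LD_le_GKdim [Nontrivial A] : LD k A ≤ GKdim k A := by
  rw [LD]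
  split_ifs
  · exact zero_le
  · refine iSup₂_le fun V hV => sSup_le ?_
    rintro _ ⟨d, -, rfl, hVDI⟩
    exact hVDI.ofReal_le_GKdim hV

end GrowthOfSubframes

section GKdimBounds

variable {k : Type*} [Field k] {A : Type*} [Ring A] [Algebra k A]

theorem GKdim_le_of_injective {B : Type*} [Ring B] [Algebra k B] (f : A →ₐ[k] B)
    (hf : Function.Injective f) : GKdim k A ≤ GKdim k B := by
  refine iSup₂_le fun V hV => le_of_eq_of_le ?_ (hV.map f).limsup_le_GKdim
  congr with n
  rw [← Submodule.map_pow, LinearEquiv.finrank_eq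
    (Submodule.equivMapOfInjective f.toLinearMap hf (V ^ n))]

theorem GKdim_eq_zero_of_subsingleton [Subsingleton A] : GKdim k A = 0 := by
  refine le_antisymm (iSup₂_le fun V _ => ?_) zero_le
  simp [Module.finrank_zero_of_subsingleton]

end GKdimBounds

theorem stmt_0_general (k : Type*) [Field k]
    (B : Type*) [Ring B] [Algebra k B] (A : Subalgebra k B)
    (hLD : LD k A = LD k B) (hstable : LDStable k B) :
    LDStable k A := by
  have hGK : GKdim k A ≤ LD k A := by
    rw [hLD, hstable]
    exact GKdim_le_of_injective A.val Subtype.val_injective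
  refine le_antisymm ?_ hGK
  rcases subsingleton_or_nontrivial B with hB | hB
  · rw [hLD, hstable, GKdim_eq_zero_of_subsingleton]
    exact zero_le
  · exact LD_le_GKdim

/-- Let `A ⊆ B` be `k`-algebras which are both prime Goldie rings.
If `LD A = LD B` and `B` is `LD`-stable, then `A` is `LD`-stable. -/
theorem stmt_0 (k : Type*) [Field k] [CharZero k]
    (B : Type*) [Ring B] [Algebra k B] (A : Subalgebra k B)
    (hA : IsPrimeGoldie A) (hB : IsPrimeGoldie B)
    (hLD : LD k A = LD k B) (hstable : LDStable k B) :
    LDStable k A :=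
  stmt_0_general k B A hLD hstable
end

section
/- Let R and S be prime rings. Then any Morita context (R, S, V, W, θ, ψ) implementing a Morita equivalence between R and S (i.e. with θ : V ⊗_S W → R and ψ : W ⊗_R V → S surjective) is a prime context. -/
/-- A Morita context between rings `R` and `S`: an `(R,S)`-bimodule `V`, an
`(S,R)`-bimodule `W`, and balanced biadditive pairings `θ : V ⊗_S W → R`,
`ψ : W ⊗_R V → S` satisfying the associativity conditions
`θ(v⊗w)·v' = v·ψ(w⊗v')` and `ψ(w⊗v)·w' = w·θ(v⊗w')`.
Right module structures are encoded as modules over the opposite rings. -/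
structure MoritaContextData (R S : Type*) [Ring R] [Ring S] where
  V : Type*
  W : Type*
  [addV : AddCommGroup V]
  [addW : AddCommGroup W]
  [modRV : Module R V]
  [modSV : Module Sᵐᵒᵖ V]
  [commV : SMulCommClass R Sᵐᵒᵖ V]
  [modSW : Module S W]
  [modRW : Module Rᵐᵒᵖ W]
  [commW : SMulCommClass S Rᵐᵒᵖ W]
  θ : V →+ W →+ R
  ψ : W →+ V →+ S
  θ_smul_left : ∀ (r : R) (v : V) (w : W), θ (r • v) w = r * θ v w
  θ_smul_right : ∀ (v : V) (w : W) (r : R), θ v (MulOpposite.op r • w) = θ v w * r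
  θ_balanced : ∀ (v : V) (s : S) (w : W), θ (MulOpposite.op s • v) w = θ v (s • w)
  ψ_smul_left : ∀ (s : S) (w : W) (v : V), ψ (s • w) v = s * ψ w v
  ψ_smul_right : ∀ (w : W) (v : V) (s : S), ψ w (MulOpposite.op s • v) = ψ w v * s
  ψ_balanced : ∀ (w : W) (r : R) (v : V), ψ (MulOpposite.op r • w) v = ψ w (r • v)
  assoc₁ : ∀ (v : V) (w : W) (v' : V), θ v w • v' = MulOpposite.op (ψ w v') • v
  assoc₂ : ∀ (w : W) (v : V) (w' : W), ψ w v • w' = MulOpposite.op (θ v w') • w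

attribute [instance] MoritaContextData.addV MoritaContextData.addW
  MoritaContextData.modRV MoritaContextData.modSV MoritaContextData.commV
  MoritaContextData.modSW MoritaContextData.modRW MoritaContextData.commW

/-- A Morita context is a prime context if `R` and `S` are prime rings and
`θ(v ⊗ W) ≠ 0`, `θ(V ⊗ w) ≠ 0` and `θ(V·s ⊗ W) ≠ 0` for all nonzero `v ∈ V`,
`w ∈ W`, `s ∈ S`. -/
def MoritaContextData.IsPrimeContext {R S : Type*} [Ring R] [Ring S]
    (c : MoritaContextData R S) : Prop :=
  IsPrimeRing' R ∧ IsPrimeRing' S ∧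
  (∀ v : c.V, v ≠ 0 → ∃ w : c.W, c.θ v w ≠ 0) ∧
  (∀ w : c.W, w ≠ 0 → ∃ v : c.V, c.θ v w ≠ 0) ∧
  (∀ s : S, s ≠ 0 → ∃ (v : c.V) (w : c.W), c.θ (MulOpposite.op s • v) w ≠ 0)

/-!
Since `ψ` is onto, `1 ∈ S` is a sum of values `±ψ(w ⊗ v)`, so an additive map out of `S`
that kills every `ψ(w ⊗ v)` is zero. Applying this to `s ↦ v·s`, `s ↦ s·w`, `t ↦ s t` and
`t ↦ t s`, the associativity conditions turn each vanishing of `θ` into a vanishing of such a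
map. For the third condition, `θ(V·s ⊗ W) = 0` gives `V·ψ(s·w ⊗ v) = θ(V ⊗ s·w)·v = 0`, and
`V` is a faithful right `S`-module.
-/

namespace MoritaContextData

variable {R S : Type*} [Ring R] [Ring S] {c : MoritaContextData R S}
  (hψ : ∀ s : S, s ∈ AddSubgroup.closure {x : S | ∃ (w : c.W) (v : c.V), x = c.ψ w v})
include hψ

theorem addMonoidHom_eq_zero_of_map_ψ {M : Type*} [AddCommGroup M] (f : S →+ M)
    (hf : ∀ w v, f (c.ψ w v) = 0) : f = 0 :=
  AddMonoidHom.eq_of_eqOn_dense (eq_top_iff.2 fun s _ => hψ s)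
    (by rintro _ ⟨w, v, rfl⟩; simp [hf])

theorem eq_zero_of_mul_ψ_eq_zero {s : S} (h : ∀ w v, s * c.ψ w v = 0) : s = 0 := by
  simpa using DFunLike.congr_fun (addMonoidHom_eq_zero_of_map_ψ hψ (AddMonoidHom.mulLeft s) h) 1

theorem eq_zero_of_ψ_mul_eq_zero {s : S} (h : ∀ w v, c.ψ w v * s = 0) : s = 0 := by
  simpa using DFunLike.congr_fun (addMonoidHom_eq_zero_of_map_ψ hψ (AddMonoidHom.mulRight s) h) 1

theorem eq_zero_of_forall_op_smul_eq_zero {s : S} (h : ∀ v : c.V, MulOpposite.op s • v = 0) :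
    s = 0 :=
  eq_zero_of_ψ_mul_eq_zero hψ fun w v => by rw [← c.ψ_smul_right, h, map_zero]

theorem V_eq_zero_of_forall_θ_eq_zero {v : c.V} (h : ∀ w, c.θ v w = 0) : v = 0 := by
  let f : S →+ c.V := AddMonoidHom.mk' (fun s => MulOpposite.op s • v) fun s t => by
    simp only [MulOpposite.op_add, add_smul]
  have hf : ∀ w v', f (c.ψ w v') = 0 := fun w v' => by
    show MulOpposite.op (c.ψ w v') • v = 0
    rw [← c.assoc₁, h, zero_smul]
  simpa [f] using DFunLike.congr_fun (addMonoidHom_eq_zero_of_map_ψ hψ f hf) 1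

theorem W_eq_zero_of_forall_θ_eq_zero {w : c.W} (h : ∀ v, c.θ v w = 0) : w = 0 := by
  have hf : ∀ w' v, (smulAddHom S c.W).flip w (c.ψ w' v) = 0 := fun w' v => by
    rw [AddMonoidHom.flip_apply, smulAddHom_apply, c.assoc₂, h, MulOpposite.op_zero, zero_smul]
  simpa using DFunLike.congr_fun (addMonoidHom_eq_zero_of_map_ψ hψ _ hf) 1

theorem eq_zero_of_forall_θ_op_smul_eq_zero {s : S}
    (h : ∀ (v : c.V) (w : c.W), c.θ (MulOpposite.op s • v) w = 0) : s = 0 := by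
  refine eq_zero_of_mul_ψ_eq_zero hψ fun w v => ?_
  rw [← c.ψ_smul_left]
  refine eq_zero_of_forall_op_smul_eq_zero hψ fun v' => ?_
  rw [← c.assoc₁, ← c.θ_balanced, h, zero_smul]

end MoritaContextData

theorem stmt_10_general (R S : Type*) [Ring R] [Ring S]
    (hR : IsPrimeRing' R) (hS : IsPrimeRing' S)
    (c : MoritaContextData R S)
    (hψ : ∀ s : S, s ∈ AddSubgroup.closure {x : S | ∃ (w : c.W) (v : c.V), x = c.ψ w v}) :
    c.IsPrimeContext := by
  refine ⟨hR, hS, fun v hv => ?_, fun w hw => ?_, fun s hs => ?_⟩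
  · by_contra! h
    exact hv (MoritaContextData.V_eq_zero_of_forall_θ_eq_zero hψ h)
  · by_contra! h
    exact hw (MoritaContextData.W_eq_zero_of_forall_θ_eq_zero hψ h)
  · by_contra! h
    exact hs (MoritaContextData.eq_zero_of_forall_θ_op_smul_eq_zero hψ h)

/-- let `R` and `S` be prime rings.  Then any Morita context between `R`
and `S` implementing a Morita equivalence (i.e. with both pairings `θ` and `ψ`
surjective) is a prime context. -/
theorem stmt_10 (R S : Type*) [Ring R] [Ring S]
    (hR : IsPrimeRing' R) (hS : IsPrimeRing' S)
    (c : MoritaContextData R S)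
    (hθ : ∀ r : R, r ∈ AddSubgroup.closure {x : R | ∃ (v : c.V) (w : c.W), x = c.θ v w})
    (hψ : ∀ s : S, s ∈ AddSubgroup.closure {x : S | ∃ (w : c.W) (v : c.V), x = c.ψ w v}) :
    c.IsPrimeContext :=
  stmt_10_general R S hR hS c hψ
end
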